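/- Let n, p, k be integers with 0 ≤ k < p−1, p < n and n−p+k > p, and let R(n,p,k) be the corresponding intersection of two quadrics in ℝ^n. Then R(n,p,k) is homeomorphic to the product of unit spheres S^{p−1} × S^{n−p−1}. -/

import Mathlib

open Metric

/-- The intersection of two quadrics in ℝⁿ associated to the polytope `P_k`:
`u₁² + ⋯ + u_p² = p` and `u₁² + ⋯ + u_k² + u_{p+1}² + ⋯ + u_n² = n - p + k`. -/
def quadR (n p k : ℕ) : Set (EuclideanSpace ℝ (Fin n)) :=
  {u | (∑ j : Fin n, if (j : ℕ) < p then u j ^ 2 else 0) = (p : ℝ) ∧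
       (∑ j : Fin n, if (j : ℕ) < k ∨ p ≤ (j : ℕ) then u j ^ 2 else 0) = (n : ℝ) - p + k}

/-! Split `u ∈ ℝⁿ` as `(v, w) ∈ ℝᵖ × ℝⁿ⁻ᵖ`. Then `R(n,p,k)` is the set where `‖v‖² = p` and
`‖w‖² = n - p + k - (v₁² + ⋯ + v_k²)`. On the sphere `‖v‖ = √p` the right-hand side is at least
`n - 2p + k > 0`, so `R(n,p,k)` is a bundle of spheres over `S^{p-1}` whose radius is a continuous
positive function of the base point; rescaling each fibre to radius one trivializes it. -/

section SphereBundle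

variable {E F : Type*} [NormedAddCommGroup E] [NormedSpace ℝ E]
  [NormedAddCommGroup F] [NormedSpace ℝ F]

noncomputable def sphereHomeomorphUnitSphere (r : ℝ) (hr : 0 < r) :
    sphere (0 : E) r ≃ₜ sphere (0 : E) 1 :=
  (Homeomorph.smulOfNeZero r⁻¹ (inv_ne_zero hr.ne')).sets <| by
    ext x
    simp [norm_smul, abs_of_pos hr, inv_mul_eq_one₀ hr.ne', eq_comm]

noncomputable def sphereBundleHomeomorphProd (A : Set E) (g : E → ℝ) (hg : ContinuousOn g A)
    (hg_pos : ∀ x ∈ A, 0 < g x) :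
    {x : E × F | x.1 ∈ A ∧ ‖x.2‖ = g x.1} ≃ₜ A × sphere (0 : F) 1 where
  toFun x := (⟨x.1.1, x.2.1⟩, ⟨(g x.1.1)⁻¹ • x.1.2, by
    have := hg_pos _ x.2.1
    simp [norm_smul, x.2.2, abs_of_pos this, this.ne']⟩)
  invFun y := ⟨(y.1.1, g y.1.1 • y.2.1), y.1.2, by
    simp [norm_smul, abs_of_pos (hg_pos _ y.1.2)]⟩
  left_inv x := by
    ext
    · rfl
    · simp [smul_smul, (hg_pos _ x.2.1).ne']
  right_inv y := by
    ext
    · rfl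
    · simp [smul_smul, (hg_pos _ y.1.2).ne']
  continuous_toFun := by
    have hgx : Continuous fun x : {x : E × F | x.1 ∈ A ∧ ‖x.2‖ = g x.1} => g x.1.1 :=
      hg.comp_continuous (by fun_prop) fun x => x.2.1
    have hgx_inv : Continuous fun x : {x : E × F | x.1 ∈ A ∧ ‖x.2‖ = g x.1} => (g x.1.1)⁻¹ :=
      hgx.inv₀ fun x => (hg_pos _ x.2.1).ne'
    exact .prodMk (by fun_prop) (.subtype_mk (hgx_inv.smul (by fun_prop)) _)
  continuous_invFun := by
    have hgy : Continuous fun y : A × sphere (0 : F) 1 => g y.1.1 :=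
      hg.comp_continuous (by fun_prop) fun y => y.1.2
    exact .subtype_mk (.prodMk (by fun_prop) (hgy.smul (by fun_prop))) _

end SphereBundle

def partialSqNorm (k : ℕ) {m : ℕ} (v : EuclideanSpace ℝ (Fin m)) : ℝ :=
  ∑ i : Fin m, if (i : ℕ) < k then v i ^ 2 else 0

@[fun_prop]
lemma continuous_partialSqNorm (k m : ℕ) :
    Continuous (partialSqNorm k : EuclideanSpace ℝ (Fin m) → ℝ) := by
  refine continuous_finsetSum _ fun i _ => ?_
  split_ifs <;> fun_prop

lemma partialSqNorm_le_norm_sq (k : ℕ) {m : ℕ} (v : EuclideanSpace ℝ (Fin m)) :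
    partialSqNorm k v ≤ ‖v‖ ^ 2 := by
  rw [EuclideanSpace.real_norm_sq_eq]
  exact Finset.sum_le_sum fun i _ => by split_ifs <;> simp [sq_nonneg]

lemma mem_quadR_add_iff {p l k : ℕ} (u : EuclideanSpace ℝ (Fin (p + l))) :
    u ∈ quadR (p + l) p k ↔
      ‖(EuclideanSpace.finAddEquivProd u).1‖ ^ 2 = p ∧
      partialSqNorm k (EuclideanSpace.finAddEquivProd u).1
        + ‖(EuclideanSpace.finAddEquivProd u).2‖ ^ 2 = l + k := by
  have hfst (i : Fin p) : ¬ p ≤ (i : ℕ) := not_le.mpr i.2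
  simp only [quadR, Set.mem_ofPred_eq, EuclideanSpace.real_norm_sq_eq, partialSqNorm,
    Fin.sum_univ_add, Fin.val_castAdd, Fin.val_natAdd]
  simp [hfst]

lemma norm_eq_sqrt_iff {E : Type*} [SeminormedAddCommGroup E] (x : E) {c : ℝ} (hc : 0 ≤ c) :
    ‖x‖ = √c ↔ ‖x‖ ^ 2 = c := by
  rw [eq_comm, Real.sqrt_eq_iff_eq_sq hc (norm_nonneg x), eq_comm]

noncomputable def quadRHomeomorph {p l k : ℕ} (hpk : (p : ℝ) < l + k) :
    quadR (p + l) p k ≃ₜ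
      {x : EuclideanSpace ℝ (Fin p) × EuclideanSpace ℝ (Fin l) |
        x.1 ∈ sphere 0 √p ∧ ‖x.2‖ = √(l + k - partialSqNorm k x.1)} :=
  EuclideanSpace.finAddEquivProd.toHomeomorph.sets <| by
    ext u
    set v := (EuclideanSpace.finAddEquivProd u).1
    set w := (EuclideanSpace.finAddEquivProd u).2
    simp only [Set.mem_preimage, Set.mem_ofPred_eq, mem_sphere_zero_iff_norm,
      ContinuousLinearEquiv.coe_toHomeomorph, mem_quadR_add_iff]
    rw [norm_eq_sqrt_iff v (Nat.cast_nonneg p)]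
    refine and_congr_right fun hv => ?_
    have := partialSqNorm_le_norm_sq k v
    rw [norm_eq_sqrt_iff w (by linarith)]
    constructor <;> intro <;> linarith

theorem stmt0 (n p k : ℕ) (hkp : k + 1 < p) (h : 2 * p < n + k) :
    Nonempty (quadR n p k ≃ₜ
      sphere (0 : EuclideanSpace ℝ (Fin p)) 1 ×
      sphere (0 : EuclideanSpace ℝ (Fin (n - p))) 1) := by
  obtain ⟨l, rfl⟩ : ∃ l, n = p + l := ⟨n - p, by omega⟩
  rw [Nat.add_sub_cancel_left]
  have hp : (0 : ℝ) < p := by exact_mod_cast (by omega : 0 < p)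
  have hpl : (p : ℝ) < l + k := by exact_mod_cast (by omega : p < l + k)
  have hg_pos (v : EuclideanSpace ℝ (Fin p)) (hv : v ∈ sphere 0 √p) :
      0 < √(l + k - partialSqNorm k v) := by
    have := partialSqNorm_le_norm_sq k v
    rw [mem_sphere_zero_iff_norm.mp hv, Real.sq_sqrt hp.le] at this
    exact Real.sqrt_pos.mpr (by linarith)
  exact ⟨(quadRHomeomorph hpl).trans <|
    (sphereBundleHomeomorphProd _ _ (by fun_prop) hg_pos).trans <|
    (sphereHomeomorphUnitSphere √p (Real.sqrt_pos.mpr hp)).prodCongr (.refl _)⟩
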